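/- arXiv:cs/0506063 — 7 statements merged into one kernel-verified Lean document; each statement's English description precedes it below -/
import Mathlib

section
/- Let ≺ be an acyclic binary relation on a finite set r, and define X ≪ Y by: for all x ∈ X \ Y there exists y ∈ Y \ X with x ≺ y. Then ≪ is antisymmetric: if X ≪ Y and Y ≪ X then X = Y. -/
/-- A relation is acyclic if no element is related to itself by the transitive closure. -/
def Acyclic {α : Type*} (prec : α → α → Prop) : Prop :=
  ∀ x, ¬ Relation.TransGen prec x x

/-- The global preference order on sets of tuples: `X ≪ Y`. -/
def ll {α : Type*} (prec : α → α → Prop) (X Y : Set α) : Prop :=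
  ∀ x ∈ X \ Y, ∃ y ∈ Y \ X, prec x y

/-- Closed neighborhood of `x` in the conflict graph. -/
def nbhd {α : Type*} (conflict : α → α → Prop) (x : α) : Set α :=
  {x} ∪ {y | conflict x y}

/-- The winnow operator: elements of `s` not dominated by any element of `s`. -/
def winnow {α : Type*} (prec : α → α → Prop) (s : Set α) : Set α :=
  {t ∈ s | ¬ ∃ t' ∈ s, prec t t'}

/-- A repair: a maximal subset of `r` containing no conflicting pair. -/
def IsRepair {α : Type*} (r : Set α) (conflict : α → α → Prop) (X : Set α) : Prop :=
  X ⊆ r ∧ (∀ a ∈ X, ∀ b ∈ X, ¬ conflict a b) ∧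
    ∀ y ∈ r, y ∉ X → ∃ a ∈ X, conflict y a

/-- A locally preferred repair: obtainable by iteratively choosing an undominated
tuple and removing it together with its conflict neighborhood. -/
def IsLRepair {α : Type*} (r : Set α) (conflict prec : α → α → Prop) (X : Set α) : Prop :=
  ∃ (n : ℕ) (x : Fin n → α), Function.Injective x ∧ X = Set.range x ∧
    (∀ i : Fin n, x i ∈ winnow prec (r \ {y | ∃ j, j < i ∧ y ∈ nbhd conflict (x j)})) ∧
    winnow prec (r \ {y | ∃ i, y ∈ nbhd conflict (x i)}) = ∅

/-- A globally preferred repair: a `≪`-maximal repair. -/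
def IsGRepair {α : Type*} (r : Set α) (conflict prec : α → α → Prop) (X : Set α) : Prop :=
  IsRepair r conflict X ∧ ∀ Y, IsRepair r conflict Y → ll prec X Y → Y = X

/-
Every element of the symmetric difference `X ∆ Y` is `≺`-below another element of it, since `X ≪ Y`
handles `X \ Y` and `Y ≪ X` handles `Y \ X`. Following these steps inside the finite set `X ∆ Y`
would produce a cycle of `≺`, so `X ∆ Y` is empty.
-/

open scoped symmDiff

theorem Acyclic.eq_empty_of_forall_exists_rel {α : Type*} {prec : α → α → Prop}
    (hacyc : Acyclic prec) {S : Set α} (hS : S.Finite) (h : ∀ x ∈ S, ∃ y ∈ S, prec x y) :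
    S = ∅ := by
  have : IsStrictOrder α (flip (Relation.TransGen prec)) :=
    { irrefl := hacyc, trans := fun _ _ _ hab hbc => hbc.trans hab }
  refine Set.eq_empty_of_forall_notMem fun x hx => ?_
  obtain ⟨⟨m, hm⟩, -, hmax⟩ :=
    (hS.wellFoundedOn (r := flip (Relation.TransGen prec))).has_min Set.univ ⟨⟨x, hx⟩, trivial⟩
  obtain ⟨y, hy, hmy⟩ := h m hm
  exact hmax ⟨y, hy⟩ trivial (.single hmy)

theorem exists_rel_mem_symmDiff_of_ll {α : Type*} {prec : α → α → Prop} {X Y : Set α}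
    (hXY : ll prec X Y) (hYX : ll prec Y X) : ∀ x ∈ X ∆ Y, ∃ y ∈ X ∆ Y, prec x y := by
  rintro x (hx | hx)
  · obtain ⟨y, hy, hxy⟩ := hXY x hx
    exact ⟨y, Or.inr hy, hxy⟩
  · obtain ⟨y, hy, hxy⟩ := hYX x hx
    exact ⟨y, Or.inl hy, hxy⟩

/-- the relation ≪ induced by an acyclic priority is antisymmetric. -/
theorem ll_antisymm {α : Type*} (r : Set α) (hr : r.Finite) (prec : α → α → Prop)
    (hacyc : Acyclic prec) (X Y : Set α) (hX : X ⊆ r) (hY : Y ⊆ r)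
    (hXY : ll prec X Y) (hYX : ll prec Y X) : X = Y := by
  have hfin : (X ∆ Y).Finite :=
    hr.subset (Set.symmDiff_subset_union.trans (Set.union_subset hX hY))
  exact symmDiff_eq_bot.1 <|
    hacyc.eq_empty_of_forall_exists_rel hfin (exists_rel_mem_symmDiff_of_ll hXY hYX)
end

section
/- Let ≺ be an acyclic and transitive binary relation on a finite set r, and define X ≪ Y by: for all x ∈ X \ Y there exists y ∈ Y \ X with x ≺ y. Then ≪ is transitive. -/
/-! Follow `x ∈ X \ Z` upwards along `≺`: `X ≪ Y` moves it into `Y \ X`; if it is not yet in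
`Z`, `Y ≪ Z` moves it into `Z \ Y`; if it is back in `X`, repeat. Transitivity makes the endpoint,
which lies in `Z \ X`, dominate `x`, and the walk terminates because an acyclic transitive
relation is a strict order, hence well founded (upwards) on the finite set `Y ∪ Z`. -/

theorem Acyclic.irrefl {α : Type*} {prec : α → α → Prop} (h : Acyclic prec) (a : α) :
    ¬ prec a a :=
  fun hab => h a (.single hab)

section LlTrans

variable {α : Type*} {prec : α → α → Prop} {X Y Z : Set α}

theorem exists_prec_mem_diff_of_forall_prec (htrans : Transitive prec)
    (hXY : ll prec X Y) (hYZ : ll prec Y Z) {a : α}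
    (ih : ∀ b ∈ Y ∪ Z, prec a b → b ∈ X \ Y ∪ Y \ Z → ∃ z ∈ Z \ X, prec b z)
    (ha : a ∈ X \ Y ∪ Y \ Z) : ∃ z ∈ Z \ X, prec a z := by
  rcases ha with haXY | haYZ
  · obtain ⟨y, ⟨hyY, hyX⟩, hay⟩ := hXY a haXY
    by_cases hyZ : y ∈ Z
    · exact ⟨y, ⟨hyZ, hyX⟩, hay⟩
    · obtain ⟨z, hz, hyz⟩ := ih y (.inl hyY) hay (.inr ⟨hyY, hyZ⟩)
      exact ⟨z, hz, htrans hay hyz⟩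
  · obtain ⟨z, ⟨hzZ, hzY⟩, haz⟩ := hYZ a haYZ
    by_cases hzX : z ∈ X
    · obtain ⟨z', hz', hzz'⟩ := ih z (.inr hzZ) haz (.inl ⟨hzX, hzY⟩)
      exact ⟨z', hz', htrans haz hzz'⟩
    · exact ⟨z, ⟨hzZ, hzX⟩, haz⟩

theorem ll_trans_of_wellFoundedOn (htrans : Transitive prec)
    (hwf : (Y ∪ Z).WellFoundedOn (flip prec)) (hXY : ll prec X Y) (hYZ : ll prec Y Z) :
    ll prec X Z := by
  have hescape : ∀ b ∈ Y ∪ Z, b ∈ X \ Y ∪ Y \ Z → ∃ z ∈ Z \ X, prec b z := fun b hb =>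
    hwf.induction hb fun _ _ ih => exists_prec_mem_diff_of_forall_prec htrans hXY hYZ ih
  exact fun x hx => exists_prec_mem_diff_of_forall_prec htrans hXY hYZ
    (fun b hb _ => hescape b hb) (sdiff_triangle X Y Z hx)

end LlTrans

theorem ll_trans_general {α : Type*} (r : Set α) (hr : r.Finite) (prec : α → α → Prop)
    (hacyc : Acyclic prec) (htrans : Transitive prec) (X Y Z : Set α)
    (hY : Y ⊆ r) (hZ : Z ⊆ r)
    (hXY : ll prec X Y) (hYZ : ll prec Y Z) : ll prec X Z :=
  have : IsStrictOrder α (flip prec) :=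
    { irrefl := hacyc.irrefl, trans := fun _ _ _ hab hbc => htrans hbc hab }
  ll_trans_of_wellFoundedOn htrans (hr.subset (Set.union_subset hY hZ)).wellFoundedOn hXY hYZ

/-- if ≺ is acyclic and transitive, then ≪ is transitive. -/
theorem ll_trans {α : Type*} (r : Set α) (hr : r.Finite) (prec : α → α → Prop)
    (hacyc : Acyclic prec) (htrans : Transitive prec) (X Y Z : Set α)
    (hX : X ⊆ r) (hY : Y ⊆ r) (hZ : Z ⊆ r)
    (hXY : ll prec X Y) (hYZ : ll prec Y Z) : ll prec X Z :=
  ll_trans_general r hr prec hacyc htrans X Y Z hY hZ hXY hYZ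
end

section
/- Let ≺ be an acyclic binary relation on a finite set r and suppose X, Y ⊆ r satisfy X ≪ Y (i.e., every x ∈ X \ Y is dominated by some y ∈ Y \ X). Then every maximal (X\Y, Y\X)-alternating ≺-chain has even length, i.e., ends with an element of Y \ X. -/
theorem maximal_alternating_chain_even_general {α : Type*}
    (prec : α → α → Prop) (X Y : Set α)
    (hll : ll prec X Y)
    (n : ℕ) (hn : 0 < n) (c : Fin n → α)
    (hmem : ∀ i : Fin n, if Even (i : ℕ) then c i ∈ X \ Y else c i ∈ Y \ X)
    (hmax : ¬ ∃ z, (if Even n then z ∈ X \ Y else z ∈ Y \ X) ∧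
      prec (c ⟨n - 1, Nat.sub_lt hn one_pos⟩) z) :
    Even n := by
  by_contra hodd
  have hlast := hmem ⟨n - 1, Nat.sub_lt hn one_pos⟩
  rw [if_pos (Nat.Odd.sub_odd (Nat.not_even_iff_odd.mp hodd) odd_one)] at hlast
  obtain ⟨y, hy, hlast_prec_y⟩ := hll _ hlast
  exact hmax ⟨y, by rwa [if_neg hodd], hlast_prec_y⟩

/-- if `X ≪ Y`, every maximal `(X\Y, Y\X)`-alternating ≺-chain has
even length (it ends with an element of `Y \ X`). The chain of length `n` is
given by `c : Fin n → α`, its element at (0-based) position `i` lying in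
`X \ Y` for even `i` and in `Y \ X` for odd `i`. Maximality says it cannot be
extended by one further element. -/
theorem maximal_alternating_chain_even {α : Type*} (r : Set α) (hr : r.Finite)
    (prec : α → α → Prop) (hacyc : Acyclic prec) (X Y : Set α)
    (hX : X ⊆ r) (hY : Y ⊆ r) (hll : ll prec X Y)
    (n : ℕ) (hn : 0 < n) (c : Fin n → α)
    (hmem : ∀ i : Fin n, if Even (i : ℕ) then c i ∈ X \ Y else c i ∈ Y \ X)
    (hchain : ∀ (i : ℕ) (h : i + 1 < n),
      prec (c ⟨i, Nat.lt_of_succ_lt h⟩) (c ⟨i + 1, h⟩))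
    (hmax : ¬ ∃ z, (if Even n then z ∈ X \ Y else z ∈ Y \ X) ∧
      prec (c ⟨n - 1, Nat.sub_lt hn one_pos⟩) z) :
    Even n :=
  maximal_alternating_chain_even_general prec X Y hll n hn c hmem hmax
end

section
/- Every l-repair is a g-repair: if ≺ is an acyclic priority on the conflict graph of a finite database r, then every repair constructed by the iterative algorithm that repeatedly selects a ≺-undominated tuple and deletes it and its neighbors (an l-repair) is ≪-maximal among all repairs (a g-repair). -/
/-!
Acyclicity makes the winnow of a finite nonempty set nonempty, so the algorithm only stops once
every tuple of `r` is selected or adjacent to a selected one; hence an l-repair `X` is a repair.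
If `X ≪ Y` for a repair `Y`, induction along the order of selection shows `X ⊆ Y`: were the
selected `xᵢ` missing from `Y`, the `y ∈ Y \ X` with `xᵢ ≺ y` would still be available at step `i`
(it conflicts with no earlier `xⱼ ∈ Y`), contradicting that `xᵢ` was undominated. Maximality of
`X` then forces `Y = X`.
-/

section

variable {α : Type*} {r : Set α} {conflict prec : α → α → Prop}

theorem Acyclic.winnow_nonempty (hacyc : Acyclic prec) {s : Set α} (hs : s.Finite)
    (hne : s.Nonempty) : (winnow prec s).Nonempty := by
  have : Finite s := hs
  have : Nonempty s := hne.to_subtype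
  let R : s → s → Prop := fun a b => Relation.TransGen prec b.1 a.1
  have : IsTrans s R := ⟨fun _ _ _ hab hbc => hbc.trans hab⟩
  have : Std.Irrefl R := ⟨fun a => hacyc a.1⟩
  obtain ⟨m, -, hm⟩ :=
    (Finite.wellFounded_of_trans_of_irrefl R).has_min Set.univ Set.univ_nonempty
  exact ⟨m.1, m.2, fun ⟨t, ht, hmt⟩ => hm ⟨t, ht⟩ trivial (.single hmt)⟩

theorem IsRepair.eq_of_subset {X Y : Set α} (hX : IsRepair r conflict X)
    (hY : IsRepair r conflict Y) (hXY : X ⊆ Y) : Y = X := by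
  refine Set.Subset.antisymm ?_ hXY
  intro z hzY
  by_contra hzX
  obtain ⟨a, haX, hza⟩ := hX.2.2 z (hY.1 hzY) hzX
  exact hY.2.1 z hzY a (hXY haX) hza

section Selection

variable {n : ℕ} {x : Fin n → α}
  (hstep : ∀ i, x i ∈ winnow prec (r \ {y | ∃ j, j < i ∧ y ∈ nbhd conflict (x j)}))
include hstep

theorem not_conflict_of_lt_of_mem_winnow {i j : Fin n} (hji : j < i) :
    ¬ conflict (x j) (x i) :=
  fun hc => (hstep i).1.2 ⟨j, hji, Or.inr hc⟩

theorem isRepair_range_of_mem_winnow (hr : r.Finite) (hacyc : Acyclic prec)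
    (hsymm : ∀ x y, conflict x y → conflict y x) (hirr : ∀ x, ¬ conflict x x)
    (hdone : winnow prec (r \ {y | ∃ i, y ∈ nbhd conflict (x i)}) = ∅) :
    IsRepair r conflict (Set.range x) := by
  refine ⟨Set.range_subset_iff.mpr fun i => (hstep i).1.1, ?_, ?_⟩
  · rintro _ ⟨i, rfl⟩ _ ⟨j, rfl⟩ hc
    rcases lt_trichotomy i j with hij | rfl | hji
    · exact not_conflict_of_lt_of_mem_winnow hstep hij hc
    · exact hirr _ hc
    · exact not_conflict_of_lt_of_mem_winnow hstep hji (hsymm _ _ hc)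
  · intro y hyr hyX
    by_contra! hfree
    have hy_left : y ∈ r \ {z | ∃ i, z ∈ nbhd conflict (x i)} := by
      refine ⟨hyr, fun ⟨i, hy⟩ => hy.elim (fun hyx => hyX ⟨i, hyx.symm⟩) fun hc => ?_⟩
      exact hfree (x i) ⟨i, rfl⟩ (hsymm _ _ hc)
    have := hacyc.winnow_nonempty (hr.subset Set.sdiff_subset) ⟨y, hy_left⟩
    rw [hdone] at this
    exact Set.not_nonempty_empty this

theorem range_subset_of_ll_of_mem_winnow {Y : Set α} (hYr : Y ⊆ r)
    (hYind : ∀ a ∈ Y, ∀ b ∈ Y, ¬ conflict a b) (hll : ll prec (Set.range x) Y) :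
    Set.range x ⊆ Y := by
  rintro _ ⟨i, rfl⟩
  induction i using WellFoundedLT.induction with
  | _ i ih =>
    by_contra hxi
    obtain ⟨y, ⟨hyY, hyX⟩, hxy⟩ := hll (x i) ⟨⟨i, rfl⟩, hxi⟩
    have hy_avail : y ∈ r \ {z | ∃ j, j < i ∧ z ∈ nbhd conflict (x j)} := by
      refine ⟨hYr hyY, fun ⟨j, hji, hy⟩ => hy.elim (fun hyx => hyX ⟨j, hyx.symm⟩) ?_⟩
      exact hYind _ (ih j hji) _ hyY
    exact (hstep i).2 ⟨y, hy_avail, hxy⟩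

end Selection

end

theorem lrepair_is_grepair_general {α : Type*} (r : Set α) (hr : r.Finite)
    (conflict prec : α → α → Prop)
    (hsymm : ∀ x y, conflict x y → conflict y x)
    (hirr : ∀ x, ¬ conflict x x)
    (hacyc : Acyclic prec)
    (X : Set α) (hX : IsLRepair r conflict prec X) :
    IsGRepair r conflict prec X := by
  obtain ⟨n, x, -, rfl, hstep, hdone⟩ := hX
  have hrep := isRepair_range_of_mem_winnow hstep hr hacyc hsymm hirr hdone
  refine ⟨hrep, fun Y hY hll => hrep.eq_of_subset hY ?_⟩
  exact range_subset_of_ll_of_mem_winnow hstep hY.1 hY.2.1 hll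

/-- every l-repair is a g-repair. -/
theorem lrepair_is_grepair {α : Type*} (r : Set α) (hr : r.Finite)
    (conflict prec : α → α → Prop)
    (hsymm : ∀ x y, conflict x y → conflict y x)
    (hirr : ∀ x, ¬ conflict x x)
    (hsub : ∀ x y, prec x y → conflict x y)
    (hasymm : ∀ x y, prec x y → ¬ prec y x)
    (hacyc : Acyclic prec)
    (X : Set α) (hX : IsLRepair r conflict prec X) :
    IsGRepair r conflict prec X :=
  lrepair_is_grepair_general r hr conflict prec hsymm hirr hacyc X hX
end

section
/- Non-discrimination for l-repairs: if the priority ≺ is empty, then the set of l-repairs equals the set of all repairs (maximal independent sets of the conflict graph). -/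
@[simp]
theorem winnow_false {α : Type*} (s : Set α) : winnow (fun _ _ => False) s = s := by
  ext t
  simp [winnow]

section GreedyConstruction

variable {α : Type*} {r : Set α} {conflict : α → α → Prop} {n : ℕ} {x : Fin n → α}

theorem forall_mem_diff_nbhd_of_lt_iff (hsymm : ∀ a b, conflict a b → conflict b a)
    (hirr : ∀ a, ¬ conflict a a) (hinj : Function.Injective x) :
    (∀ i, x i ∈ r \ {y | ∃ j, j < i ∧ y ∈ nbhd conflict (x j)}) ↔
      Set.range x ⊆ r ∧ ∀ a ∈ Set.range x, ∀ b ∈ Set.range x, ¬ conflict a b := by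
  constructor
  · intro hstep
    refine ⟨Set.range_subset_iff.mpr fun i => (hstep i).1, ?_⟩
    rintro _ ⟨i, rfl⟩ _ ⟨j, rfl⟩ hij
    rcases lt_trichotomy i j with hlt | rfl | hgt
    · exact (hstep j).2 ⟨i, hlt, Or.inr hij⟩
    · exact hirr _ hij
    · exact (hstep i).2 ⟨j, hgt, Or.inr (hsymm _ _ hij)⟩
  · rintro ⟨hsub, hind⟩ i
    refine ⟨hsub ⟨i, rfl⟩, ?_⟩
    rintro ⟨j, hji, hmem | hconf⟩
    · exact hji.ne' (hinj hmem)
    · exact hind _ ⟨j, rfl⟩ _ ⟨i, rfl⟩ hconf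

theorem diff_nbhds_eq_empty_iff (hsymm : ∀ a b, conflict a b → conflict b a) :
    r \ {y | ∃ i, y ∈ nbhd conflict (x i)} = ∅ ↔
      ∀ y ∈ r, y ∉ Set.range x → ∃ a ∈ Set.range x, conflict y a := by
  rw [Set.sdiff_eq_empty]
  constructor
  · intro hcover y hy hyX
    obtain ⟨i, rfl | hconf⟩ := hcover hy
    · exact absurd ⟨i, rfl⟩ hyX
    · exact ⟨x i, ⟨i, rfl⟩, hsymm _ _ hconf⟩
  · intro hmax y hy
    by_cases hyX : y ∈ Set.range x
    · obtain ⟨i, rfl⟩ := hyX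
      exact ⟨i, Or.inl rfl⟩
    · obtain ⟨_, ⟨i, rfl⟩, hconf⟩ := hmax y hy hyX
      exact ⟨i, Or.inr (hsymm _ _ hconf)⟩

end GreedyConstruction

/-- non-discrimination for l-repairs. With the empty priority,
the l-repairs are exactly the repairs. -/
theorem lrepair_empty_priority {α : Type*} (r : Set α) (hr : r.Finite)
    (conflict : α → α → Prop)
    (hsymm : ∀ x y, conflict x y → conflict y x)
    (hirr : ∀ x, ¬ conflict x x) (X : Set α) :
    IsLRepair r conflict (fun _ _ => False) X ↔ IsRepair r conflict X := by
  simp only [IsLRepair, winnow_false]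
  constructor
  · rintro ⟨n, x, hinj, rfl, hstep, hcover⟩
    obtain ⟨hsub, hind⟩ := (forall_mem_diff_nbhd_of_lt_iff hsymm hirr hinj).mp hstep
    exact ⟨hsub, hind, (diff_nbhds_eq_empty_iff hsymm).mp hcover⟩
  · rintro ⟨hsub, hind, hmax⟩
    obtain ⟨n, x, hinj, rfl⟩ := (hr.subset hsub).fin_param
    exact ⟨n, x, hinj, rfl, (forall_mem_diff_nbhd_of_lt_iff hsymm hirr hinj).mpr ⟨hsub, hind⟩,
      (diff_nbhds_eq_empty_iff hsymm).mpr hmax⟩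
end

section
/- Monotonicity for g-repairs: if ≺ and ≺' are acyclic priorities on the conflict graph with ≺' ⊆ ≺, then every g-repair with respect to ≺ is a g-repair with respect to ≺'. -/
theorem ll_mono {α : Type*} {prec prec' : α → α → Prop} (h : ∀ x y, prec' x y → prec x y)
    {X Y : Set α} (hXY : ll prec' X Y) : ll prec X Y := fun x hx =>
  let ⟨y, hy, hxy⟩ := hXY x hx
  ⟨y, hy, h x y hxy⟩

theorem IsGRepair.antitone_prec {α : Type*} {r : Set α} {conflict prec prec' : α → α → Prop}
    (h : ∀ x y, prec' x y → prec x y) {X : Set α} (hX : IsGRepair r conflict prec X) :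
    IsGRepair r conflict prec' X :=
  ⟨hX.1, fun Y hY hXY => hX.2 Y hY (ll_mono h hXY)⟩

theorem grepair_monotone_general {α : Type*} (r : Set α)
    (conflict prec prec' : α → α → Prop)
    (hext : ∀ x y, prec' x y → prec x y)
    (X : Set α) (hX : IsGRepair r conflict prec X) :
    IsGRepair r conflict prec' X :=
  hX.antitone_prec hext

/-- monotonicity for g-repairs. If ≺' ⊆ ≺ are acyclic priorities,
every g-repair w.r.t. ≺ is a g-repair w.r.t. ≺'. -/
theorem grepair_monotone {α : Type*} (r : Set α) (hr : r.Finite)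
    (conflict prec prec' : α → α → Prop)
    (hsymm : ∀ x y, conflict x y → conflict y x)
    (hsub : ∀ x y, prec x y → conflict x y)
    (hsub' : ∀ x y, prec' x y → conflict x y)
    (hasymm : ∀ x y, prec x y → ¬ prec y x)
    (hasymm' : ∀ x y, prec' x y → ¬ prec' y x)
    (hacyc : Acyclic prec) (hacyc' : Acyclic prec')
    (hext : ∀ x y, prec' x y → prec x y)
    (X : Set α) (hX : IsGRepair r conflict prec X) :
    IsGRepair r conflict prec' X :=
  grepair_monotone_general r conflict prec prec' hext X hX
end

section
/- There exists a finite database with a total cyclic priority for which the set of g-repairs is empty: for r = {a, b, c, d} with conflict edges {a,b}, {b,c}, {c,d}, {d,a} and priority ≺ = {(a,b),(b,c),(c,d),(d,a)}, the two repairs r₁ = {a,c} and r₂ = {b,d} satisfy r₁ ≪ r₂ and r₂ ≪ r₁, hence neither is ≪-maximal, so no g-repair exists. -/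
def C : Fin 4 → Fin 4 → Prop := fun x y =>
      (x, y) = ((0 : Fin 4), (1 : Fin 4)) ∨ (x, y) = ((1 : Fin 4), (0 : Fin 4)) ∨
      (x, y) = ((1 : Fin 4), (2 : Fin 4)) ∨ (x, y) = ((2 : Fin 4), (1 : Fin 4)) ∨
      (x, y) = ((2 : Fin 4), (3 : Fin 4)) ∨ (x, y) = ((3 : Fin 4), (2 : Fin 4)) ∨
      (x, y) = ((3 : Fin 4), (0 : Fin 4)) ∨ (x, y) = ((0 : Fin 4), (3 : Fin 4))

def P : Fin 4 → Fin 4 → Prop := fun x y =>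
      (x, y) = ((0 : Fin 4), (1 : Fin 4)) ∨ (x, y) = ((1 : Fin 4), (2 : Fin 4)) ∨
      (x, y) = ((2 : Fin 4), (3 : Fin 4)) ∨ (x, y) = ((3 : Fin 4), (0 : Fin 4))

lemma classify (X : Set (Fin 4)) (h : IsRepair Set.univ C X) :
    X = {0, 2} ∨ X = {1, 3} := by
  obtain ⟨-, hind, hmax⟩ := h
  have nb : ∀ a ∈ X, ∀ b, C a b → b ∉ X := fun a ha b hc hb => hind a ha b hb hc
  by_cases h0 : (0 : Fin 4) ∈ X
  · have h1 : (1 : Fin 4) ∉ X := nb 0 h0 1 (by unfold C; decide)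
    have h3 : (3 : Fin 4) ∉ X := nb 0 h0 3 (by unfold C; decide)
    have h2 : (2 : Fin 4) ∈ X := by
      by_contra h2
      obtain ⟨a, ha, hca⟩ := hmax 2 trivial h2
      fin_cases a
      · simp [C, Prod.ext_iff] at hca
      · exact h1 ha
      · exact h2 ha
      · exact h3 ha
    left
    ext x
    constructor
    · intro hx
      fin_cases x
      · exact Set.mem_insert _ _
      · exact absurd hx h1
      · exact Set.mem_insert_of_mem _ rfl
      · exact absurd hx h3
    · rintro (rfl | rfl) <;> assumption
  · have key : (1 : Fin 4) ∈ X ∨ (3 : Fin 4) ∈ X := by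
      obtain ⟨a, ha, hca⟩ := hmax 0 trivial h0
      fin_cases a
      · simp [C, Prod.ext_iff] at hca
      · exact Or.inl ha
      · simp [C, Prod.ext_iff] at hca
      · exact Or.inr ha
    have h13 : (1 : Fin 4) ∈ X ∧ (3 : Fin 4) ∈ X := by
      rcases key with h1 | h3
      · refine ⟨h1, ?_⟩
        have h2 : (2 : Fin 4) ∉ X := nb 1 h1 2 (by unfold C; decide)
        by_contra h3
        obtain ⟨a, ha, hca⟩ := hmax 3 trivial h3
        fin_cases a
        · exact h0 ha
        · simp [C, Prod.ext_iff] at hca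
        · exact h2 ha
        · exact h3 ha
      · refine ⟨?_, h3⟩
        have h2 : (2 : Fin 4) ∉ X := nb 3 h3 2 (by unfold C; decide)
        by_contra h1
        obtain ⟨a, ha, hca⟩ := hmax 1 trivial h1
        fin_cases a
        · exact h0 ha
        · exact h1 ha
        · exact h2 ha
        · simp [C, Prod.ext_iff] at hca
    obtain ⟨h1, h3⟩ := h13
    have h2 : (2 : Fin 4) ∉ X := nb 1 h1 2 (by unfold C; decide)
    right
    ext x
    constructor
    · intro hx
      fin_cases x
      · exact absurd hx h0
      · exact Set.mem_insert _ _
      · exact absurd hx h2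
      · exact Set.mem_insert_of_mem _ rfl
    · rintro (rfl | rfl) <;> assumption

lemma r1_repair : IsRepair Set.univ C {0, 2} := by
  refine ⟨Set.subset_univ _, ?_, ?_⟩
  · rintro a (rfl | rfl) b (rfl | rfl) h <;> revert h <;> unfold C <;> decide
  · intro y _ hy
    fin_cases y
    · exact absurd (Set.mem_insert _ _) hy
    · exact ⟨0, Set.mem_insert _ _, by unfold C; decide⟩
    · exact absurd (Set.mem_insert_of_mem _ rfl) hy
    · exact ⟨0, Set.mem_insert _ _, by unfold C; decide⟩

lemma r2_repair : IsRepair Set.univ C {1, 3} := by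
  refine ⟨Set.subset_univ _, ?_, ?_⟩
  · rintro a (rfl | rfl) b (rfl | rfl) h <;> revert h <;> unfold C <;> decide
  · intro y _ hy
    fin_cases y
    · exact ⟨1, Set.mem_insert _ _, by unfold C; decide⟩
    · exact absurd (Set.mem_insert _ _) hy
    · exact ⟨1, Set.mem_insert _ _, by unfold C; decide⟩
    · exact absurd (Set.mem_insert_of_mem _ rfl) hy

lemma l12 : ll P {0, 2} {1, 3} := by
  rintro x ⟨hx1, hx2⟩
  fin_cases x
  · exact ⟨1, ⟨Set.mem_insert _ _, by simp⟩, by unfold P; decide⟩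
  · exact absurd (Set.mem_insert _ _) hx2
  · exact ⟨3, ⟨Set.mem_insert_of_mem _ rfl, by simp⟩, by unfold P; decide⟩
  · exact absurd (Set.mem_insert_of_mem _ rfl) hx2

lemma l21 : ll P {1, 3} {0, 2} := by
  rintro x ⟨hx1, hx2⟩
  fin_cases x
  · exact absurd (Set.mem_insert _ _) hx2
  · exact ⟨2, ⟨Set.mem_insert_of_mem _ rfl, by simp⟩, by unfold P; decide⟩
  · exact absurd (Set.mem_insert_of_mem _ rfl) hx2
  · exact ⟨0, ⟨Set.mem_insert _ _, by simp⟩, by unfold P; decide⟩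

lemma ne12 : ({0, 2} : Set (Fin 4)) ≠ {1, 3} := by
  intro h
  have h0 : (0 : Fin 4) ∈ ({1, 3} : Set (Fin 4)) := h ▸ Set.mem_insert _ _
  simp at h0

/-- with a total cyclic priority there may be no g-repair.
On the 4-cycle a-b-c-d-a (a=0, b=1, c=2, d=3) with cyclic priority
≺ = {(a,b),(b,c),(c,d),(d,a)}, the repairs r₁ = {a,c} and r₂ = {b,d} satisfy
r₁ ≪ r₂ and r₂ ≪ r₁ while r₁ ≠ r₂, and no g-repair exists. -/
theorem no_grepair_cyclic_example :
    let conflict : Fin 4 → Fin 4 → Prop := fun x y =>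
      (x, y) = ((0 : Fin 4), (1 : Fin 4)) ∨ (x, y) = ((1 : Fin 4), (0 : Fin 4)) ∨
      (x, y) = ((1 : Fin 4), (2 : Fin 4)) ∨ (x, y) = ((2 : Fin 4), (1 : Fin 4)) ∨
      (x, y) = ((2 : Fin 4), (3 : Fin 4)) ∨ (x, y) = ((3 : Fin 4), (2 : Fin 4)) ∨
      (x, y) = ((3 : Fin 4), (0 : Fin 4)) ∨ (x, y) = ((0 : Fin 4), (3 : Fin 4))
    let prec : Fin 4 → Fin 4 → Prop := fun x y =>
      (x, y) = ((0 : Fin 4), (1 : Fin 4)) ∨ (x, y) = ((1 : Fin 4), (2 : Fin 4)) ∨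
      (x, y) = ((2 : Fin 4), (3 : Fin 4)) ∨ (x, y) = ((3 : Fin 4), (0 : Fin 4))
    IsRepair Set.univ conflict {0, 2} ∧ IsRepair Set.univ conflict {1, 3} ∧
    ll prec {0, 2} {1, 3} ∧ ll prec {1, 3} {0, 2} ∧
    ({0, 2} : Set (Fin 4)) ≠ {1, 3} ∧
    ¬ ∃ X : Set (Fin 4), IsGRepair Set.univ conflict prec X := by
  intro conflict prec
  refine ⟨r1_repair, r2_repair, l12, l21, ne12, ?_⟩
  rintro ⟨X, hrep, hmax⟩
  have hrep' : IsRepair Set.univ C X := hrep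
  rcases classify X hrep' with rfl | rfl
  · exact ne12 (hmax {1, 3} r2_repair l12).symm
  · exact ne12 (hmax {0, 2} r1_repair l21)
end
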